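/- arXiv:1806.09571 — 4 statements merged into one kernel-verified Lean document; each statement's English description precedes it below -/
import Mathlib

section
/- If A is an N×N column-stochastic matrix and z', z'' are N-dimensional probability vectors, then ‖A(z' − z'')‖₁ ≤ τ(A)·‖z' − z''‖₁, where τ is the Dobrushin ergodicity coefficient and ‖·‖₁ the ℓ¹ norm. -/
open Finset

/-- A column-stochastic matrix: nonnegative entries, each column sums to 1. -/
def ColStochastic {N : ℕ} (A : Matrix (Fin (N+1)) (Fin (N+1)) ℝ) : Prop :=
  (∀ i j, 0 ≤ A i j) ∧ ∀ j, ∑ i, A i j = 1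

/-- A probability vector: nonnegative entries summing to 1. -/
def ProbVector {N : ℕ} (z : Fin (N+1) → ℝ) : Prop :=
  (∀ i, 0 ≤ z i) ∧ ∑ i, z i = 1

/-- The Dobrushin ergodicity coefficient. -/
noncomputable def tau {N : ℕ} (A : Matrix (Fin (N+1)) (Fin (N+1)) ℝ) : ℝ :=
  (1/2) * Finset.univ.sup' Finset.univ_nonempty
    (fun p : Fin (N+1) × Fin (N+1) => ∑ i, |A i p.1 - A i p.2|)

/-- `‖A(z' − z'')‖₁ ≤ τ(A)·‖z' − z''‖₁` for a column-stochastic `A`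
    and probability vectors `z'`, `z''`. -/
theorem stmt1 {N : ℕ} (A : Matrix (Fin (N+1)) (Fin (N+1)) ℝ) (hA : ColStochastic A)
    (z' z'' : Fin (N+1) → ℝ) (hz' : ProbVector z') (hz'' : ProbVector z'') :
    ∑ i, |(A.mulVec (z' - z'')) i| ≤ tau A * ∑ i, |z' i - z'' i| := by
  classical
  set p : Fin (N+1) → ℝ := fun i => max (z' i - z'' i) 0 with hpdef
  set q : Fin (N+1) → ℝ := fun i => max (z'' i - z' i) 0 with hqdef
  have hpapp : ∀ i, p i = max (z' i - z'' i) 0 := fun i => by rw [hpdef]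
  have hqapp : ∀ i, q i = max (z'' i - z' i) 0 := fun i => by rw [hqdef]
  have hp0 : ∀ i, 0 ≤ p i := fun i => by rw [hpapp]; exact le_max_right _ _
  have hq0 : ∀ i, 0 ≤ q i := fun i => by rw [hqapp]; exact le_max_right _ _
  have hpq : ∀ i, p i - q i = z' i - z'' i := by
    intro i
    rcases le_total (z'' i) (z' i) with h | h
    · rw [hpapp, hqapp, max_eq_left (by linarith), max_eq_right (by linarith)]; ring
    · rw [hpapp, hqapp, max_eq_right (by linarith), max_eq_left (by linarith)]; ring
  have habs : ∀ i, |z' i - z'' i| = p i + q i := by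
    intro i
    rcases le_total (z'' i) (z' i) with h | h
    · rw [abs_of_nonneg (by linarith), hpapp, hqapp,
        max_eq_left (by linarith), max_eq_right (by linarith)]; ring
    · rw [abs_of_nonpos (by linarith), hpapp, hqapp,
        max_eq_right (by linarith), max_eq_left (by linarith)]; ring
  have hxsum : ∑ i, (z' i - z'' i) = 0 := by
    rw [Finset.sum_sub_distrib, hz'.2, hz''.2]; ring
  set c : ℝ := ∑ i, p i with hc
  have hc0 : 0 ≤ c := Finset.sum_nonneg fun i _ => hp0 i
  have hsum : ∑ i, q i = c := by
    have h1 : ∑ i, (p i - q i) = 0 := by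
      rw [Finset.sum_congr rfl fun i _ => hpq i]; exact hxsum
    rw [Finset.sum_sub_distrib] at h1
    rw [hc]; linarith
  set M : ℝ := Finset.univ.sup' Finset.univ_nonempty
    (fun pr : Fin (N+1) × Fin (N+1) => ∑ i, |A i pr.1 - A i pr.2|) with hMdef
  have htau : tau A = (1/2) * M := rfl
  have hMle : ∀ j k, ∑ i, |A i j - A i k| ≤ M := by
    intro j k
    exact Finset.le_sup' (fun pr : Fin (N+1) × Fin (N+1) => ∑ i, |A i pr.1 - A i pr.2|)
      (Finset.mem_univ (j, k))
  have hmv : ∀ i, (A.mulVec (z' - z'')) i = ∑ j, A i j * (z' j - z'' j) := by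
    intro i
    simp only [Matrix.mulVec, dotProduct, Pi.sub_apply]
  -- key identity
  have key : ∀ i, c * ∑ j, A i j * (z' j - z'' j)
      = ∑ j, ∑ k, p j * q k * (A i j - A i k) := by
    intro i
    have h1 : ∀ j, ∑ k, p j * q k * (A i j - A i k)
        = p j * A i j * c - p j * ∑ k, q k * A i k := by
      intro j
      calc ∑ k, p j * q k * (A i j - A i k)
          = ∑ k, (p j * A i j * q k - p j * (q k * A i k)) := by
            apply Finset.sum_congr rfl; intro k _; ring
        _ = p j * A i j * ∑ k, q k - p j * ∑ k, q k * A i k := by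
            rw [Finset.sum_sub_distrib, ← Finset.mul_sum, ← Finset.mul_sum]
        _ = p j * A i j * c - p j * ∑ k, q k * A i k := by rw [hsum]
    calc c * ∑ j, A i j * (z' j - z'' j)
        = c * ∑ j, A i j * (p j - q j) := by
          congr 1
          apply Finset.sum_congr rfl; intro j _
          rw [hpq j]
      _ = (∑ j, p j * A i j) * c - (∑ j, p j) * ∑ k, q k * A i k := by
          rw [Finset.sum_congr rfl (fun j (_ : j ∈ univ) => (mul_sub (A i j) (p j) (q j)))]
          rw [Finset.sum_sub_distrib, ← hc]
          rw [Finset.sum_congr rfl (fun j (_ : j ∈ univ) => (mul_comm (A i j) (p j)))]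
          rw [Finset.sum_congr (rfl : (univ : Finset (Fin (N+1))) = univ)
            (fun j (_ : j ∈ univ) => (mul_comm (A i j) (q j)))]
          ring
      _ = ∑ j, (p j * A i j * c - p j * ∑ k, q k * A i k) := by
          rw [Finset.sum_sub_distrib, ← Finset.sum_mul, ← Finset.sum_mul, ← hc]
      _ = ∑ j, ∑ k, p j * q k * (A i j - A i k) := by
          rw [Finset.sum_congr rfl fun j _ => (h1 j).symm]
  -- main estimate
  have step : c * ∑ i, |∑ j, A i j * (z' j - z'' j)| ≤ M * c * c := by
    rw [Finset.mul_sum]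
    calc ∑ i, c * |∑ j, A i j * (z' j - z'' j)|
        = ∑ i, |∑ j, ∑ k, p j * q k * (A i j - A i k)| := by
          apply Finset.sum_congr rfl; intro i _
          rw [← key i, abs_mul, abs_of_nonneg hc0]
      _ ≤ ∑ i, ∑ j, ∑ k, p j * q k * |A i j - A i k| := by
          apply Finset.sum_le_sum; intro i _
          calc |∑ j, ∑ k, p j * q k * (A i j - A i k)|
              ≤ ∑ j, |∑ k, p j * q k * (A i j - A i k)| := Finset.abs_sum_le_sum_abs _ _
            _ ≤ ∑ j, ∑ k, |p j * q k * (A i j - A i k)| :=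
                Finset.sum_le_sum fun j _ => Finset.abs_sum_le_sum_abs _ _
            _ = ∑ j, ∑ k, p j * q k * |A i j - A i k| := by
                apply Finset.sum_congr rfl; intro j _
                apply Finset.sum_congr rfl; intro k _
                rw [abs_mul, abs_mul, abs_of_nonneg (hp0 j), abs_of_nonneg (hq0 k)]
      _ = ∑ j, ∑ k, p j * q k * ∑ i, |A i j - A i k| := by
          rw [Finset.sum_comm]
          apply Finset.sum_congr rfl; intro j _
          rw [Finset.sum_comm]
          apply Finset.sum_congr rfl; intro k _
          rw [Finset.mul_sum]
      _ ≤ ∑ j, ∑ k, p j * q k * M := by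
          apply Finset.sum_le_sum; intro j _
          apply Finset.sum_le_sum; intro k _
          exact mul_le_mul_of_nonneg_left (hMle j k) (mul_nonneg (hp0 j) (hq0 k))
      _ = M * c * c := by
          calc ∑ j, ∑ k, p j * q k * M
              = ∑ j, p j * (c * M) := by
                apply Finset.sum_congr rfl; intro j _
                have h2 : ∑ k, p j * q k * M = (∑ k, q k) * (p j * M) := by
                  rw [Finset.sum_mul]
                  apply Finset.sum_congr rfl; intro k _; ring
                rw [h2, hsum]; ring
            _ = (∑ j, p j) * (c * M) := by rw [← Finset.sum_mul]
            _ = M * c * c := by rw [← hc]; ring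
  have hrhs : tau A * ∑ i, |z' i - z'' i| = M * c := by
    have h2 : ∑ i, |z' i - z'' i| = 2 * c := by
      rw [Finset.sum_congr rfl fun i _ => habs i, Finset.sum_add_distrib, ← hc, hsum]; ring
    rw [htau, h2]; ring
  rw [hrhs]
  have hmvsum : ∑ i, |(A.mulVec (z' - z'')) i| = ∑ i, |∑ j, A i j * (z' j - z'' j)| := by
    apply Finset.sum_congr rfl; intro i _; rw [hmv i]
  rw [hmvsum]
  rcases eq_or_lt_of_le hc0 with hceq | hcpos
  · -- c = 0 : all terms vanish
    have hpz : ∀ i, p i = 0 :=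
      fun i => (Finset.sum_eq_zero_iff_of_nonneg (fun i _ => hp0 i)).1 hceq.symm i (mem_univ i)
    have hqz : ∀ i, q i = 0 := by
      intro i
      have : ∑ i, q i = 0 := by rw [hsum, ← hceq]
      exact (Finset.sum_eq_zero_iff_of_nonneg (fun i _ => hq0 i)).1 this i (mem_univ i)
    have hz : ∀ i, z' i - z'' i = 0 := by
      intro i; rw [← hpq i, hpz i, hqz i]; ring
    have hl : ∑ i, |∑ j, A i j * (z' j - z'' j)| = 0 := by
      apply Finset.sum_eq_zero; intro i _
      rw [Finset.sum_eq_zero fun j _ => by rw [hz j]; ring, abs_zero]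
    rw [hl, ← hceq]; simp
  · nlinarith [step]
end

section
/- Let e ∈ ℝ^N be the all-ones vector and Λ = I − ee^T/N. Let {A_n}_{n≥1} be column-stochastic N×N matrices with all entries ≥ α/N for some α ∈ (0,1). Set β = 1 − α and K = 4β^{-1}N. Then for every n ≥ 1, the Frobenius norm satisfies ‖A₁A₂⋯AₙΛ‖ ≤ Kβⁿ. -/
open Finset

/-- The Frobenius norm of a real matrix. -/
noncomputable def frobNorm {m n : ℕ} (A : Matrix (Fin m) (Fin n) ℝ) : ℝ :=
  Real.sqrt (∑ i, ∑ j, (A i j)^2)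

/-- The centering matrix `Λ = I − ee^T/N`. -/
noncomputable def Lam (N : ℕ) : Matrix (Fin (N+1)) (Fin (N+1)) ℝ :=
  1 - Matrix.of (fun _ _ => 1 / (N+1 : ℝ))

/-- The product `A₁A₂⋯Aₙ` (in order), with the empty product equal to `I`. -/
def matProd {N : ℕ} (A : ℕ → Matrix (Fin (N+1)) (Fin (N+1)) ℝ) : ℕ → Matrix (Fin (N+1)) (Fin (N+1)) ℝ
  | 0 => 1
  | n+1 => matProd A n * A (n+1)

/-- if each `Aₙ` is column-stochastic with all entries `≥ α/N`,
    `β = 1 − α` and `K = 4β⁻¹N`, then `‖A₁⋯AₙΛ‖ ≤ Kβⁿ` for every `n ≥ 1`. -/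
theorem stmt4 {N : ℕ} (A : ℕ → Matrix (Fin (N+1)) (Fin (N+1)) ℝ)
    (hstoch : ∀ n, 1 ≤ n → ColStochastic (A n))
    (α : ℝ) (hα : α ∈ Set.Ioo (0:ℝ) 1)
    (hentry : ∀ n, 1 ≤ n → ∀ i j, α / (N+1 : ℝ) ≤ A n i j) :
    ∀ n, 1 ≤ n →
      frobNorm (matProd A n * Lam N) ≤ (4 * (1-α)⁻¹ * (N+1 : ℝ)) * (1-α)^n := by
  obtain ⟨hα0, hα1⟩ := hα
  have hβ0 : (0:ℝ) < 1 - α := by linarith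
  have hN : (0:ℝ) < (N:ℝ) + 1 := by positivity
  have hNα : ((N:ℝ)+1) * (α / ((N:ℝ)+1)) = α := by field_simp
  -- one-step Dobrushin contraction on zero-sum vectors (ℓ¹ norm)
  have step : ∀ n, 1 ≤ n → ∀ v : Fin (N+1) → ℝ, ∑ j, v j = 0 →
      ∑ i, |(A n).mulVec v i| ≤ (1-α) * ∑ j, |v j| := by
    intro n hn v hv
    obtain ⟨hpos, hsum⟩ := hstoch n hn
    have h1 : ∀ i, (A n).mulVec v i = ∑ j, (A n i j - α/((N:ℝ)+1)) * v j := by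
      intro i
      simp only [Matrix.mulVec, dotProduct]
      have h0 : (α/((N:ℝ)+1)) * ∑ j, v j = 0 := by rw [hv]; ring
      calc ∑ j, A n i j * v j
          = ∑ j, A n i j * v j - (α/((N:ℝ)+1)) * ∑ j, v j := by rw [h0]; ring
        _ = ∑ j, (A n i j - α/((N:ℝ)+1)) * v j := by
            rw [Finset.mul_sum, ← Finset.sum_sub_distrib]
            apply Finset.sum_congr rfl; intro j _; ring
    calc ∑ i, |(A n).mulVec v i|
        ≤ ∑ i, ∑ j, (A n i j - α/((N:ℝ)+1)) * |v j| := by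
          apply Finset.sum_le_sum; intro i _
          rw [h1 i]
          refine (Finset.abs_sum_le_sum_abs _ _).trans ?_
          apply Finset.sum_le_sum; intro j _
          rw [abs_mul, abs_of_nonneg (by linarith [hentry n hn i j])]
      _ = ∑ j, (∑ i, (A n i j - α/((N:ℝ)+1))) * |v j| := by
          rw [Finset.sum_comm]
          apply Finset.sum_congr rfl; intro j _
          rw [Finset.sum_mul]
      _ = (1-α) * ∑ j, |v j| := by
          rw [Finset.mul_sum]
          apply Finset.sum_congr rfl; intro j _
          rw [Finset.sum_sub_distrib, hsum j, Finset.sum_const, Finset.card_univ,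
            Fintype.card_fin, nsmul_eq_mul]
          push_cast
          rw [hNα]
      _ = (1-α) * ∑ j, |v j| := rfl
  -- zero-sum preservation
  have presv : ∀ n, 1 ≤ n → ∀ v : Fin (N+1) → ℝ, ∑ j, v j = 0 →
      ∑ i, (A n).mulVec v i = 0 := by
    intro n hn v hv
    obtain ⟨hpos, hsum⟩ := hstoch n hn
    simp only [Matrix.mulVec, dotProduct]
    rw [Finset.sum_comm]
    calc ∑ j, ∑ i, A n i j * v j
        = ∑ j, (∑ i, A n i j) * v j := by
          apply Finset.sum_congr rfl; intro j _; rw [Finset.sum_mul]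
      _ = ∑ j, v j := by
          apply Finset.sum_congr rfl; intro j _; rw [hsum j, one_mul]
      _ = 0 := hv
  -- iterated contraction
  have key : ∀ n, ∀ v : Fin (N+1) → ℝ, ∑ j, v j = 0 →
      (∑ i, |(matProd A n).mulVec v i| ≤ (1-α)^n * ∑ j, |v j|) ∧
      ∑ i, (matProd A n).mulVec v i = 0 := by
    intro n
    induction n with
    | zero =>
      intro v hv
      simp [matProd, Matrix.one_mulVec, hv]
    | succ n ih =>
      intro v hv
      have h2 := presv (n+1) (by omega) v hv
      have hrw : (matProd A (n+1)).mulVec v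
          = (matProd A n).mulVec ((A (n+1)).mulVec v) := by
        show (matProd A n * A (n+1)).mulVec v = _
        rw [← Matrix.mulVec_mulVec]
      obtain ⟨ihb, ihz⟩ := ih ((A (n+1)).mulVec v) h2
      constructor
      · rw [hrw]
        refine ihb.trans ?_
        rw [pow_succ, mul_assoc]
        exact mul_le_mul_of_nonneg_left (step (n+1) (by omega) v hv)
          (pow_nonneg hβ0.le n)
      · rw [hrw]; exact ihz
  -- properties of the columns of Λ
  have hLam : ∀ i j : Fin (N+1), Lam N i j
      = (if i = j then (1:ℝ) else 0) - 1/((N:ℝ)+1) := by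
    intro i j
    simp [Lam, Matrix.sub_apply, Matrix.one_apply]
  have hc0 : (0:ℝ) ≤ 1/((N:ℝ)+1) := by positivity
  have hc1 : 1/((N:ℝ)+1) ≤ 1 := by
    rw [div_le_one hN]; linarith [Nat.cast_nonneg (α := ℝ) N]
  have hcN : ((N:ℝ)+1) * (1/((N:ℝ)+1)) = 1 := by field_simp
  have hLamZero : ∀ j : Fin (N+1), ∑ i, Lam N i j = 0 := by
    intro j
    simp only [hLam]
    rw [Finset.sum_sub_distrib, Finset.sum_ite_eq' Finset.univ j (fun _ => (1:ℝ)),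
      Finset.sum_const, Finset.card_univ, Fintype.card_fin, nsmul_eq_mul]
    push_cast
    rw [hcN]
    simp
  have hLamAbs : ∀ j : Fin (N+1), ∑ i, |Lam N i j| ≤ 2 := by
    intro j
    have heach : ∀ i, |Lam N i j|
        = (if i = j then 1 - 2*(1/((N:ℝ)+1)) else 0) + 1/((N:ℝ)+1) := by
      intro i
      rw [hLam]
      split
      · rw [abs_of_nonneg (by linarith)]; ring
      · rw [abs_of_nonpos (by linarith)]; ring
    simp only [heach]
    rw [Finset.sum_add_distrib, Finset.sum_ite_eq' Finset.univ j
      (fun _ => 1 - 2*(1/((N:ℝ)+1))), Finset.sum_const, Finset.card_univ,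
      Fintype.card_fin, nsmul_eq_mul]
    push_cast
    rw [hcN]
    simp
    have : (0:ℝ) ≤ ((N:ℝ)+1)⁻¹ := by positivity
    linarith
  -- entrywise bound
  intro n hn
  have hentryb : ∀ i j, |(matProd A n * Lam N) i j| ≤ 2 * (1-α)^n := by
    intro i j
    have hk := key n (fun k => Lam N k j) (hLamZero j)
    have heq : (matProd A n * Lam N) i j
        = (matProd A n).mulVec (fun k => Lam N k j) i := by
      simp [Matrix.mul_apply, Matrix.mulVec, dotProduct]
    rw [heq]
    calc |(matProd A n).mulVec (fun k => Lam N k j) i|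
        ≤ ∑ i', |(matProd A n).mulVec (fun k => Lam N k j) i'| :=
          Finset.single_le_sum (f := fun i' => |(matProd A n).mulVec (fun k => Lam N k j) i'|)
            (fun i' _ => abs_nonneg _) (Finset.mem_univ i)
      _ ≤ (1-α)^n * ∑ k, |Lam N k j| := hk.1
      _ ≤ (1-α)^n * 2 :=
          mul_le_mul_of_nonneg_left (hLamAbs j) (pow_nonneg hβ0.le n)
      _ = 2 * (1-α)^n := mul_comm _ _
  -- Frobenius bound
  have hfb : frobNorm (matProd A n * Lam N) ≤ (((N:ℝ)+1) * (2 * (1-α)^n)) := by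
    have hb : (0:ℝ) ≤ 2 * (1-α)^n := by positivity
    have h1 : ∑ i, ∑ j, ((matProd A n * Lam N) i j)^2
        ≤ (((N:ℝ)+1) * (2 * (1-α)^n))^2 := by
      calc ∑ i, ∑ j, ((matProd A n * Lam N) i j)^2
          ≤ ∑ i : Fin (N+1), ∑ j : Fin (N+1), (2 * (1-α)^n)^2 := by
            apply Finset.sum_le_sum; intro i _
            apply Finset.sum_le_sum; intro j _
            rw [← sq_abs]
            exact pow_le_pow_left₀ (abs_nonneg _) (hentryb i j) 2
        _ = (((N:ℝ)+1) * (2 * (1-α)^n))^2 := by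
            rw [Finset.sum_const, Finset.sum_const, Finset.card_univ, Fintype.card_fin,
              nsmul_eq_mul, nsmul_eq_mul]
            push_cast
            ring
    have := Real.sqrt_le_sqrt h1
    rw [Real.sqrt_sq (by positivity)] at this
    exact this
  refine hfb.trans ?_
  have hinv : (1-α) * (1-α)⁻¹ = 1 := mul_inv_cancel₀ hβ0.ne'
  have hinv1 : (1:ℝ) ≤ (1-α)⁻¹ := by
    rw [le_inv_comm₀ one_pos hβ0] <;> nlinarith
  have hp : (0:ℝ) ≤ (1-α)^n := pow_nonneg hβ0.le n
  nlinarith [mul_nonneg hN.le hp]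
end

section
/- Let {A_n}_{n≥1} be column-stochastic N×N matrices with all entries ≥ α/N for some α ∈ (0,1), and let a ∈ ℝ^N satisfy e^T a = 0 (its coordinates sum to 0). Then ‖A₁⋯Aₙ a‖ ≤ 4β^{-1}N·βⁿ·‖a‖ for every n ≥ 1, where β = 1 − α and ‖·‖ is the Euclidean norm. -/
open Finset

noncomputable def eNorm {n : ℕ} (v : Fin n → ℝ) : ℝ :=
  Real.sqrt (∑ i, (v i)^2)

lemma doeblin {N : ℕ} (A : Matrix (Fin (N+1)) (Fin (N+1)) ℝ)
    (hs : ColStochastic A) (α : ℝ)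
    (he : ∀ i j, α / (N+1 : ℝ) ≤ A i j)
    (a : Fin (N+1) → ℝ) (ha : ∑ i, a i = 0) :
    ∑ i, |A.mulVec a i| ≤ (1-α) * ∑ i, |a i| := by
  have hNpos : (0:ℝ) < (N+1 : ℝ) := by positivity
  have key : ∀ i, A.mulVec a i = ∑ j, (A i j - α/(N+1)) * a j := by
    intro i
    simp [Matrix.mulVec, dotProduct, sub_mul, Finset.sum_sub_distrib, ← Finset.mul_sum, ha]
  have hbound : ∀ i, |A.mulVec a i| ≤ ∑ j, (A i j - α/(N+1)) * |a j| := by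
    intro i
    rw [key i]
    refine (Finset.abs_sum_le_sum_abs _ _).trans (Finset.sum_le_sum fun j _ => ?_)
    rw [abs_mul, abs_of_nonneg (sub_nonneg.2 (he i j))]
  calc ∑ i, |A.mulVec a i| ≤ ∑ i, ∑ j, (A i j - α/(N+1)) * |a j| :=
        Finset.sum_le_sum fun i _ => hbound i
    _ = ∑ j, (1-α) * |a j| := by
        rw [Finset.sum_comm]
        refine Finset.sum_congr rfl fun j _ => ?_
        have hc : ∑ i, (A i j - α/(N+1:ℝ)) = 1 - α := by
          rw [Finset.sum_sub_distrib, hs.2 j, Finset.sum_const, Finset.card_univ,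
            Fintype.card_fin, nsmul_eq_mul]
          push_cast
          field_simp
        rw [← Finset.sum_mul, hc]
    _ = (1-α) * ∑ i, |a i| := by rw [Finset.mul_sum]

lemma sum_zero_preserved {N : ℕ} (A : Matrix (Fin (N+1)) (Fin (N+1)) ℝ)
    (hs : ColStochastic A) (a : Fin (N+1) → ℝ) (ha : ∑ i, a i = 0) :
    ∑ i, A.mulVec a i = 0 := by
  simp only [Matrix.mulVec, dotProduct]
  rw [Finset.sum_comm]
  calc ∑ j, ∑ i, A i j * a j = ∑ j, (∑ i, A i j) * a j := by simp [Finset.sum_mul]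
    _ = ∑ j, a j := by refine Finset.sum_congr rfl fun j _ => ?_; rw [hs.2 j, one_mul]
    _ = 0 := ha

lemma l1_contract {N : ℕ} (A : ℕ → Matrix (Fin (N+1)) (Fin (N+1)) ℝ)
    (hstoch : ∀ n, 1 ≤ n → ColStochastic (A n))
    (α : ℝ) (hα : α ∈ Set.Ioo (0:ℝ) 1)
    (hentry : ∀ n, 1 ≤ n → ∀ i j, α / (N+1 : ℝ) ≤ A n i j) :
    ∀ n (a : Fin (N+1) → ℝ), ∑ i, a i = 0 →
      ∑ i, |(matProd A n).mulVec a i| ≤ (1-α)^n * ∑ i, |a i| := by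
  intro n
  induction n with
  | zero => intro a ha; simp [matProd, Matrix.mulVec_one]
  | succ n ih =>
      intro a ha
      have h1 : (matProd A (n+1)).mulVec a = (matProd A n).mulVec ((A (n+1)).mulVec a) := by
        simp [matProd, Matrix.mulVec_mulVec]
      rw [h1]
      have hz : ∑ i, (A (n+1)).mulVec a i = 0 :=
        sum_zero_preserved _ (hstoch (n+1) (Nat.le_add_left 1 n)) a ha
      calc ∑ i, |(matProd A n).mulVec ((A (n+1)).mulVec a) i|
          ≤ (1-α)^n * ∑ i, |(A (n+1)).mulVec a i| := ih _ hz
        _ ≤ (1-α)^n * ((1-α) * ∑ i, |a i|) := by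
            have hβ : (0:ℝ) ≤ 1-α := by linarith [hα.2]
            exact mul_le_mul_of_nonneg_left
              (doeblin _ (hstoch (n+1) (Nat.le_add_left 1 n)) α
                (hentry (n+1) (Nat.le_add_left 1 n)) a ha) (pow_nonneg hβ n)
        _ = (1-α)^(n+1) * ∑ i, |a i| := by ring

lemma eNorm_le_l1 {n : ℕ} (v : Fin n → ℝ) : eNorm v ≤ ∑ i, |v i| := by
  rw [eNorm]
  have h : ∑ i, (v i)^2 ≤ (∑ i, |v i|)^2 := by
    have := Finset.sum_sq_le_sq_sum_of_nonneg (s := Finset.univ)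
      (f := fun i => |v i|) (fun i _ => abs_nonneg _)
    simpa [sq_abs] using this
  calc Real.sqrt (∑ i, (v i)^2) ≤ Real.sqrt ((∑ i, |v i|)^2) := Real.sqrt_le_sqrt h
    _ = ∑ i, |v i| := Real.sqrt_sq (Finset.sum_nonneg fun i _ => abs_nonneg _)

lemma l1_le_card_eNorm {n : ℕ} (v : Fin n → ℝ) : ∑ i, |v i| ≤ (n:ℝ) * eNorm v := by
  have h : ∀ i, |v i| ≤ eNorm v := by
    intro i
    rw [eNorm]
    calc |v i| = Real.sqrt ((v i)^2) := (Real.sqrt_sq_eq_abs _).symm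
      _ ≤ Real.sqrt (∑ j, (v j)^2) := Real.sqrt_le_sqrt
          (Finset.single_le_sum (f := fun j => (v j)^2) (fun j _ => sq_nonneg _) (Finset.mem_univ i))
  calc ∑ i, |v i| ≤ ∑ _i : Fin n, eNorm v := Finset.sum_le_sum fun i _ => h i
    _ = (n:ℝ) * eNorm v := by simp [mul_comm]

/-- if each `Aₙ` is column-stochastic with all entries `≥ α/N`
    and `a` has coordinates summing to zero, then
    `‖A₁⋯Aₙ a‖ ≤ 4β⁻¹N·βⁿ·‖a‖` for every `n ≥ 1`, where `β = 1 − α`. -/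
theorem stmt5 {N : ℕ} (A : ℕ → Matrix (Fin (N+1)) (Fin (N+1)) ℝ)
    (hstoch : ∀ n, 1 ≤ n → ColStochastic (A n))
    (α : ℝ) (hα : α ∈ Set.Ioo (0:ℝ) 1)
    (hentry : ∀ n, 1 ≤ n → ∀ i j, α / (N+1 : ℝ) ≤ A n i j)
    (a : Fin (N+1) → ℝ) (ha : ∑ i, a i = 0) :
    ∀ n, 1 ≤ n →
      eNorm ((matProd A n).mulVec a) ≤ 4 * (1-α)⁻¹ * (N+1 : ℝ) * (1-α)^n * eNorm a := by
  intro n hn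
  have hβ0 : (0:ℝ) < 1 - α := by linarith [hα.2]
  have hβ1 : 1 - α < 1 := by linarith [hα.1]
  have hβinv : (1:ℝ) ≤ (1-α)⁻¹ := by
    rw [le_inv_comm₀ one_pos hβ0]
    simpa using hβ1.le
  have hEnn : 0 ≤ eNorm a := Real.sqrt_nonneg _
  calc eNorm ((matProd A n).mulVec a)
      ≤ ∑ i, |(matProd A n).mulVec a i| := eNorm_le_l1 _
    _ ≤ (1-α)^n * ∑ i, |a i| := l1_contract A hstoch α hα hentry n a ha
    _ ≤ (1-α)^n * ((N+1:ℝ) * eNorm a) := by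
        refine mul_le_mul_of_nonneg_left ?_ (by positivity)
        simpa using l1_le_card_eNorm a
    _ ≤ 4 * (1-α)⁻¹ * (N+1 : ℝ) * (1-α)^n * eNorm a := by
        have h4 : (1:ℝ) ≤ 4 * (1-α)⁻¹ := by linarith
        nlinarith [pow_nonneg hβ0.le n, mul_nonneg (mul_nonneg (by positivity : (0:ℝ) ≤ (N+1:ℝ)) (pow_nonneg hβ0.le n)) hEnn]
end

section
/- Let Q be a compact metric space, f : Q → ℝ continuous, and S = {θ ∈ Q : g(θ) = 0} for a continuous g : Q → ℝ^d, with S nonempty. Suppose for every a ∈ f(S) there exist δ_a > 0, ν_a > 1, N_a ≥ 1 such that |f(θ) − a| ≤ N_a‖g(θ)‖^{ν_a} for all θ ∈ Q with |f(θ) − a| ≤ δ_a. Then f(S) is a finite set. -/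
/-!
At a critical point `θ` (where `g θ = 0`) the Łojasiewicz inequality at a critical value `a`
reads `|f θ - a| ≤ 0` as soon as `|f θ - a| ≤ δ_a`, so every critical value is isolated among
critical values. The critical values form a compact set (the continuous image of the closed, hence
compact, zero set of `g`), and a compact discrete set is finite.
-/

open Metric

lemma Metric.isDiscrete_of_forall_dist_le {X : Type*} [PseudoMetricSpace X] {s : Set X}
    (h : ∀ x ∈ s, ∃ δ > 0, ∀ y ∈ s, dist y x ≤ δ → y = x) : IsDiscrete s := by
  refine IsDiscrete.of_nhdsWithin fun x hx ↦ Filter.le_pure_iff.2 ?_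
  obtain ⟨δ, hδ, hx_iso⟩ := h x hx
  exact mem_nhdsWithin_iff.2 ⟨δ, hδ, fun y ⟨hy, hys⟩ ↦ hx_iso y hys (mem_ball.1 hy).le⟩

lemma eq_of_lojasiewicz_of_eq_zero {Q E : Type*} [NormedAddCommGroup E] {f : Q → ℝ} {g : Q → E}
    {a δ ν N : ℝ} (hloj : ∀ θ, |f θ - a| ≤ δ → |f θ - a| ≤ N * ‖g θ‖ ^ ν) (hν : ν ≠ 0)
    {θ : Q} (hθ : g θ = 0) (hδ : |f θ - a| ≤ δ) : f θ = a := by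
  have h := hloj θ hδ
  rw [hθ, norm_zero, Real.zero_rpow hν, mul_zero, abs_nonpos_iff, sub_eq_zero] at h
  exact h

theorem stmt17_general {Q : Type*} [MetricSpace Q] [CompactSpace Q] {d : ℕ}
    (f : Q → ℝ) (hf : Continuous f)
    (g : Q → EuclideanSpace ℝ (Fin d)) (hg : Continuous g)
    (hloj : ∀ a ∈ f '' {θ | g θ = 0},
      ∃ δ > (0:ℝ), ∃ ν > (1:ℝ), ∃ Na ≥ (1:ℝ),
        ∀ θ : Q, |f θ - a| ≤ δ → |f θ - a| ≤ Na * ‖g θ‖ ^ ν) :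
    (f '' {θ | g θ = 0}).Finite := by
  have hcompact : IsCompact (f '' {θ | g θ = 0}) :=
    (isClosed_singleton.preimage hg).isCompact.image hf
  refine hcompact.finite (isDiscrete_of_forall_dist_le fun a ha ↦ ?_)
  obtain ⟨δ, hδ, ν, hν, N, -, hN⟩ := hloj a ha
  refine ⟨δ, hδ, ?_⟩
  rintro _ ⟨θ, hθ, rfl⟩ hdist
  exact eq_of_lojasiewicz_of_eq_zero hN (by positivity) hθ (Real.dist_eq _ _ ▸ hdist)

/-- under a Łojasiewicz-type gradient inequality, the set of
    critical values `f(S)` of a continuous function on a compact metric space is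
    finite, where `S = {θ : g(θ) = 0}`. -/
theorem stmt17 {Q : Type*} [MetricSpace Q] [CompactSpace Q] {d : ℕ}
    (f : Q → ℝ) (hf : Continuous f)
    (g : Q → EuclideanSpace ℝ (Fin d)) (hg : Continuous g)
    (hS : ({θ | g θ = 0} : Set Q).Nonempty)
    (hloj : ∀ a ∈ f '' {θ | g θ = 0},
      ∃ δ > (0:ℝ), ∃ ν > (1:ℝ), ∃ Na ≥ (1:ℝ),
        ∀ θ : Q, |f θ - a| ≤ δ → |f θ - a| ≤ Na * ‖g θ‖ ^ ν) :
    (f '' {θ | g θ = 0}).Finite :=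
  stmt17_general f hf g hg hloj
end
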